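/- Under Assumption (A1), let x₀ ∈ ℝ, let x : [0,∞) → ℝ satisfy x(t) = x₀ + ∫₀ᵗ (f(x(s)) + κ(x(s))) ds for all t ≥ 0, and for δ > 0 let x^δ : [0,∞) → ℝ satisfy x^δ(t) = x₀ + ∫₀ᵗ (f(x^δ(s)) + κ(x^δ(π_δ(s)))) ds for all t ≥ 0. Then for every integer p ≥ 1 there exist δ₀ > 0 and a constant C > 0, independent of t and δ, such that for all δ ∈ (0, δ₀) and all t ≥ 0, |x^δ(t) − x(t)|^p ≤ C·δ^p. -/

import Mathlib

/-!
Both trajectories stay in the ball of radius `absorbingRadius x₀ (|f 0| + γ) lam`: the one-sided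
Lipschitz condition gives `(y²)' ≤ -λ y² + (|f 0| + γ)² / λ`, and Grönwall applies. On that ball
`|f| + γ` is bounded by a constant `K` independent of `δ`, so within one sampling interval the
sampled state moves by at most `K δ`. For `e = x^δ - x` this gives
`(e²)' ≤ -2λ e² + 2 L_κ |e| (|e| + K δ) ≤ -(λ - L_κ) e² + (L_κ K δ)² / (λ - L_κ)`,
and Grönwall again yields `|e| ≤ L_κ K δ / (λ - L_κ)` for all `t ≥ 0`.

The integral equations say nothing when the integrand is not integrable, so integrability comes
first: at the first time `T₀` where it fails, the trajectory is bounded before `T₀` and equal to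
`x₀` after it (the integral is a junk `0` there), so the integrand is bounded and measurable, hence
integrable beyond `T₀`.
-/

/-- The sampling map `π_δ(t) = δ·⌊t/δ⌋`. -/
noncomputable def piD (δ t : ℝ) : ℝ := δ * (⌊t / δ⌋ : ℤ)

open Set MeasureTheory Filter Topology Real

noncomputable def absorbingRadius (x₀ c lam : ℝ) : ℝ := √(x₀ ^ 2 + (c / lam) ^ 2)

theorem continuous_of_abs_sub_le_mul {f : ℝ → ℝ} {L : ℝ → ℝ → ℝ}
    (hL : ∀ b, ContinuousAt (L · b) b) (h : ∀ a b, |f a - f b| ≤ L a b * |a - b|) :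
    Continuous f := by
  refine continuous_iff_continuousAt.2 fun b => tendsto_iff_dist_tendsto_zero.2 ?_
  have hlim : Tendsto (fun a => L a b * |a - b|) (𝓝 b) (𝓝 (L b b * |b - b|)) :=
    (hL b).mul (continuous_abs.comp (continuous_sub_right b)).continuousAt
  rw [sub_self, abs_zero, mul_zero] at hlim
  exact squeeze_zero (fun _ => dist_nonneg) (fun a => h a b) hlim

section Sampling

variable {δ : ℝ}

theorem piD_le (hδ : 0 < δ) (s : ℝ) : piD δ s ≤ s := by
  rw [piD, ← le_div_iff₀' hδ]
  exact Int.floor_le _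

theorem piD_nonneg (hδ : 0 < δ) {s : ℝ} (hs : 0 ≤ s) : 0 ≤ piD δ s :=
  mul_nonneg hδ.le (Int.cast_nonneg (Int.floor_nonneg.2 (div_nonneg hs hδ.le)))

theorem lt_piD_add (hδ : 0 < δ) (s : ℝ) : s < piD δ s + δ := by
  have h := Int.lt_floor_add_one (s / δ)
  rw [div_lt_iff₀ hδ] at h
  rw [piD]
  linarith

theorem piD_eq_of_mem_Ico (hδ : 0 < δ) {s t : ℝ} (hs : s ∈ Ico t (piD δ t + δ)) :
    piD δ s = piD δ t := by
  rw [piD, piD, Int.floor_eq_iff.2 ⟨?_, ?_⟩]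
  · exact (Int.floor_le _).trans (div_le_div_of_nonneg_right hs.1 hδ.le)
  · rw [div_lt_iff₀ hδ]
    have := hs.2
    rw [piD] at this
    linarith

theorem continuousWithinAt_comp_piD (hδ : 0 < δ) {X : Type*} [TopologicalSpace X] (g : ℝ → X)
    (t : ℝ) : ContinuousWithinAt (fun s => g (piD δ s)) (Ici t) t :=
  continuousWithinAt_const.congr_of_eventuallyEq
    (mem_nhdsWithin.2 ⟨Iio (piD δ t + δ), isOpen_Iio, lt_piD_add hδ t,
      fun _ hs => congrArg g (piD_eq_of_mem_Ico hδ ⟨hs.2, hs.1⟩)⟩) rfl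

theorem measurable_comp_piD {β : Type*} [MeasurableSpace β] (δ : ℝ) (g : ℝ → β) :
    Measurable fun s => g (piD δ s) :=
  (measurable_of_countable fun n : ℤ => g (δ * n)).comp
    (Int.measurable_floor.comp (measurable_id.div_const δ))

theorem abs_comp_piD_sub_le {y y' : ℝ → ℝ} {K s : ℝ} (hδ : 0 < δ) (hs : 0 ≤ s)
    (hc : ContinuousOn y (Icc 0 s)) (hd : ∀ t, 0 ≤ t → HasDerivWithinAt y (y' t) (Ici t) t)
    (hK : ∀ t, 0 ≤ t → |y' t| ≤ K) : |y (piD δ s) - y s| ≤ K * δ := by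
  have h0 := piD_nonneg hδ hs
  have hmvt := norm_image_sub_le_of_norm_deriv_right_le_segment
    (hc.mono (Icc_subset_Icc_left h0)) (fun t ht => hd t (h0.trans ht.1))
    (fun t ht => hK t (h0.trans ht.1)) s ⟨piD_le hδ s, le_rfl⟩
  rw [abs_sub_comm]
  calc |y s - y (piD δ s)| ≤ K * (s - piD δ s) := hmvt
    _ ≤ K * δ := mul_le_mul_of_nonneg_left (by linarith [lt_piD_add hδ s])
        ((abs_nonneg _).trans (hK 0 le_rfl))

end Sampling

theorem gronwallBound_neg_le {δ a ε t : ℝ} (ha : 0 < a) (hδ : 0 ≤ δ) (hε : 0 ≤ ε) (ht : 0 ≤ t) :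
    gronwallBound δ (-a) ε t ≤ δ + ε / a := by
  rw [gronwallBound_of_K_ne_0 (neg_ne_zero.2 ha.ne'), div_neg]
  have h1 : exp (-a * t) ≤ 1 := exp_le_one_iff.2 (by nlinarith)
  have h2 : 0 ≤ ε / a * exp (-a * t) := by positivity
  nlinarith [mul_le_mul_of_nonneg_left h1 hδ]

theorem sq_le_sq_add_div_of_hasDerivWithinAt {φ φ' : ℝ → ℝ} {a ε T : ℝ} (ha : 0 < a)
    (hε : 0 ≤ ε) (hT : 0 ≤ T) (hc : ContinuousOn φ (Icc 0 T))
    (hd : ∀ t ∈ Ico 0 T, HasDerivWithinAt φ (φ' t) (Ici t) t)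
    (hb : ∀ t ∈ Ico 0 T, 2 * φ t * φ' t ≤ -a * φ t ^ 2 + ε) :
    φ T ^ 2 ≤ φ 0 ^ 2 + ε / a := by
  have hd2 : ∀ t ∈ Ico 0 T, HasDerivWithinAt (fun s => φ s ^ 2) (2 * φ t * φ' t) (Ici t) t :=
    fun t ht => ((hd t ht).pow 2).congr_deriv (by push_cast; ring)
  have hgron := le_gronwallBound_of_liminf_deriv_right_le (hc.pow 2)
    (fun t ht r hr => by
      simpa [slope_def_field, div_eq_inv_mul] using (hd2 t ht).liminf_right_slope_le hr)
    le_rfl hb T ⟨hT, le_rfl⟩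
  exact hgron.trans (gronwallBound_neg_le ha (sq_nonneg _) hε (by simpa using hT))

theorem two_mul_mul_add_le {e A B lam L η : ℝ} (hL : L < lam) (hA : e * A ≤ -lam * e ^ 2)
    (hB : |B| ≤ η + L * |e|) :
    2 * e * (A + B) ≤ -(lam - L) * e ^ 2 + η ^ 2 / (lam - L) := by
  have ha : 0 < lam - L := sub_pos.2 hL
  have heB : e * B ≤ |e| * η + L * e ^ 2 := by
    calc e * B ≤ |e| * |B| := by rw [← abs_mul]; exact le_abs_self _
      _ ≤ |e| * (η + L * |e|) := mul_le_mul_of_nonneg_left hB (abs_nonneg e)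
      _ = |e| * η + L * e ^ 2 := by rw [← sq_abs e]; ring
  have hamgm : 2 * (|e| * η) ≤ (lam - L) * e ^ 2 + η ^ 2 / (lam - L) := by
    have hsq : (lam - L) * e ^ 2 + η ^ 2 / (lam - L) - 2 * (|e| * η)
        = ((lam - L) * |e| - η) ^ 2 / (lam - L) := by
      field_simp
      rw [← sq_abs e]
      ring
    linarith [div_nonneg (sq_nonneg ((lam - L) * |e| - η)) ha.le]
  linarith

section Primitive

variable {y g : ℝ → ℝ} {x₀ T : ℝ}

theorem continuousOn_Icc_of_eq_add_integral
    (hy : ∀ t, 0 ≤ t → y t = x₀ + ∫ s in (0 : ℝ)..t, g s)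
    (hg : IntervalIntegrable g volume 0 T) : ContinuousOn y (Icc 0 T) :=
  (continuousOn_const.add ((intervalIntegral.continuousOn_primitive_interval' hg
    left_mem_uIcc).mono Icc_subset_uIcc)).congr fun t ht => hy t ht.1

theorem hasDerivWithinAt_Ici_of_eq_add_integral
    (hy : ∀ t, 0 ≤ t → y t = x₀ + ∫ s in (0 : ℝ)..t, g s)
    (hg : IntervalIntegrable g volume 0 T) {t : ℝ} (ht : t ∈ Ico 0 T)
    (hgt : ContinuousWithinAt g (Ici t) t) : HasDerivWithinAt y (g t) (Ici t) t := by
  have hmeas : StronglyMeasurableAtFilter g (𝓝[>] t) :=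
    ⟨Ioc 0 T, mem_of_superset (Ioc_mem_nhdsGT ht.2) (Ioc_subset_Ioc_left ht.1),
      hg.1.aestronglyMeasurable⟩
  have hgt' : IntervalIntegrable g volume 0 t := hg.mono_set (by
    rw [uIcc_of_le ht.1, uIcc_of_le (ht.1.trans ht.2.le)]
    exact Icc_subset_Icc_right ht.2.le)
  exact ((intervalIntegral.integral_hasDerivWithinAt_right hgt' hmeas
    (hgt.mono Ioi_subset_Ici_self)).const_add x₀).congr_of_mem
    (fun s hs => hy s (ht.1.trans hs)) self_mem_Ici

end Primitive

theorem exists_threshold {P : ℝ → Prop} (hP : ∀ s t, 0 ≤ s → s ≤ t → P t → P s) {T : ℝ}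
    (hT : 0 ≤ T) (hPT : ¬P T) :
    ∃ T₀, 0 ≤ T₀ ∧ (∀ s, 0 ≤ s → s < T₀ → P s) ∧ ∀ s, T₀ < s → ¬P s := by
  set S := {t | 0 ≤ t ∧ ¬P t}
  have hS : S.Nonempty := ⟨T, hT, hPT⟩
  have hbdd : BddBelow S := ⟨0, fun t ht => ht.1⟩
  refine ⟨sInf S, le_csInf hS fun t ht => ht.1, fun s hs hlt => ?_, fun s hlt hs => ?_⟩
  · by_contra h
    exact (csInf_le hbdd ⟨hs, h⟩).not_gt hlt
  · obtain ⟨c, hc, hcs⟩ := (csInf_lt_iff hbdd hS).1 hlt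
    exact hc.2 (hP c s hc.1 hcs.le hs)

theorem aestronglyMeasurable_of_continuousOn_of_eq_const {μ : Measure ℝ} [NullSingletonClass μ]
    {y : ℝ → ℝ} {T c : ℝ} (hc : ContinuousOn y (Ioo 0 T)) (hconst : ∀ s, T < s → y s = c) :
    AEStronglyMeasurable y (μ.restrict (Ioi 0)) := by
  have hcover : Ioi 0 ⊆ Ioo 0 T ∪ {T} ∪ Ioi T := fun s (hs : 0 < s) => by
    rcases lt_trichotomy s T with h | h | h <;> simp [h, hs]
  refine AEStronglyMeasurable.mono_set hcover (aestronglyMeasurable_union_iff.2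
    ⟨aestronglyMeasurable_union_iff.2 ⟨hc.aestronglyMeasurable measurableSet_Ioo, ?_⟩, ?_⟩)
  · rw [Measure.restrict_eq_zero.2 (measure_singleton T)]
    exact aestronglyMeasurable_zero_measure y
  · exact aestronglyMeasurable_const.congr
      ((ae_restrict_mem measurableSet_Ioi).mono fun s hs => (hconst s hs).symm)

section Dissipative

variable {f u y : ℝ → ℝ} {x₀ lam γ : ℝ}

theorem hasDerivWithinAt_of_intervalIntegrable (hf : Continuous f)
    (hy : ∀ t, 0 ≤ t → y t = x₀ + ∫ s in (0 : ℝ)..t, (f (y s) + u s))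
    (hu : ∀ t, 0 ≤ t → ContinuousWithinAt y (Ici t) t → ContinuousWithinAt u (Ici t) t)
    {T t : ℝ} (hg : IntervalIntegrable (fun s => f (y s) + u s) volume 0 T) (ht : t ∈ Ico 0 T) :
    HasDerivWithinAt y (f (y t) + u t) (Ici t) t := by
  have hyt : ContinuousWithinAt y (Ici t) t :=
    (continuousOn_Icc_of_eq_add_integral hy hg t (Ico_subset_Icc_self ht)).mono_of_mem_nhdsWithin
      (mem_of_superset (Icc_mem_nhdsGE ht.2) (Icc_subset_Icc_left ht.1))
  exact hasDerivWithinAt_Ici_of_eq_add_integral hy hg ht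
    ((hf.continuousAt.comp_continuousWithinAt hyt).add (hu t ht.1 hyt))

theorem abs_le_absorbingRadius_of_intervalIntegrable (hf : Continuous f)
    (hy : ∀ t, 0 ≤ t → y t = x₀ + ∫ s in (0 : ℝ)..t, (f (y s) + u s))
    (hu : ∀ t, 0 ≤ t → ContinuousWithinAt y (Ici t) t → ContinuousWithinAt u (Ici t) t)
    (hlam : 0 < lam) (hcontr : ∀ a b, (a - b) * (f a - f b) ≤ -lam * (a - b) ^ 2)
    (hub : ∀ s, |u s| ≤ γ) {T : ℝ} (hT : 0 ≤ T)
    (hg : IntervalIntegrable (fun s => f (y s) + u s) volume 0 T) :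
    |y T| ≤ absorbingRadius x₀ (|f 0| + γ) lam := by
  have hy0 : y 0 = x₀ := by simpa using hy 0 le_rfl
  have hV := sq_le_sq_add_div_of_hasDerivWithinAt (ε := (|f 0| + γ) ^ 2 / lam) hlam
    (by positivity) hT (continuousOn_Icc_of_eq_add_integral hy hg)
    (fun t ht => hasDerivWithinAt_of_intervalIntegrable hf hy hu hg ht) fun t _ => by
      have hB : |f 0 + u t| ≤ (|f 0| + γ) + 0 * |y t| := by
        rw [zero_mul, add_zero]
        linarith [abs_add_le (f 0) (u t), hub t]
      have h := two_mul_mul_add_le hlam (by simpa using hcontr (y t) 0) hB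
      rw [sub_zero] at h
      convert h using 2
      ring
  rw [hy0, div_div, ← sq, ← div_pow] at hV
  exact abs_le_sqrt hV

theorem intervalIntegrable_of_dissipative (hf : Continuous f)
    (hy : ∀ t, 0 ≤ t → y t = x₀ + ∫ s in (0 : ℝ)..t, (f (y s) + u s))
    (hu : ∀ t, 0 ≤ t → ContinuousWithinAt y (Ici t) t → ContinuousWithinAt u (Ici t) t)
    (hu_meas : ∀ μ : Measure ℝ, AEStronglyMeasurable y μ → AEStronglyMeasurable u μ)
    (hlam : 0 < lam) (hcontr : ∀ a b, (a - b) * (f a - f b) ≤ -lam * (a - b) ^ 2)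
    (hub : ∀ s, |u s| ≤ γ) {T : ℝ} (hT : 0 ≤ T) :
    IntervalIntegrable (fun s => f (y s) + u s) volume 0 T := by
  set M := absorbingRadius x₀ (|f 0| + γ) lam
  by_contra hTi
  obtain ⟨T₀, hT₀, hbefore, hafter⟩ :=
    exists_threshold (P := fun t => IntervalIntegrable (fun s => f (y s) + u s) volume 0 t)
      (fun s t hs hst h => h.mono_set (by
        rw [uIcc_of_le hs, uIcc_of_le (hs.trans hst)]; exact Icc_subset_Icc_right hst)) hT hTi
  -- past `T₀` the integral is a junk `0`, so the trajectory sits at `x₀`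
  have hconst : ∀ s, T₀ < s → y s = x₀ := fun s hs => by
    rw [hy s (hT₀.trans hs.le), intervalIntegral.integral_undef (hafter s hs), add_zero]
  have hc : ContinuousOn y (Ioo 0 T₀) := fun t ht =>
    ((continuousOn_Icc_of_eq_add_integral hy (hbefore ((t + T₀) / 2) (by linarith [ht.1])
      (by linarith [ht.2]))).continuousAt
      (Icc_mem_nhds ht.1 (by linarith [ht.2]))).continuousWithinAt
  have hyM : ∀ s, 0 ≤ s → s ≠ T₀ → |y s| ≤ M := fun s hs hne => by
    rcases hne.lt_or_gt with h | h
    · exact abs_le_absorbingRadius_of_intervalIntegrable hf hy hu hlam hcontr hub hs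
        (hbefore s hs h)
    · rw [hconst s h]
      exact abs_le_sqrt (le_add_of_nonneg_right (sq_nonneg _))
  obtain ⟨C, hC⟩ := (isCompact_Icc (a := -M) (b := M)).exists_bound_of_continuousOn
    hf.continuousOn
  have hmeas := aestronglyMeasurable_of_continuousOn_of_eq_const (μ := volume) hc hconst
  refine hafter (T₀ + 1) (by linarith)
    ((intervalIntegrable_iff_integrableOn_Ioc_of_le (by linarith)).2 ?_)
  refine Integrable.mono' (integrable_const (C + γ))
    (((hf.comp_aestronglyMeasurable hmeas).add (hu_meas _ hmeas)).mono_set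
      Ioc_subset_Ioi_self) ?_
  filter_upwards [ae_restrict_mem measurableSet_Ioc,
    ae_restrict_of_ae (compl_mem_ae_iff.2 (measure_singleton T₀))] with s hs hne
  exact (abs_add_le _ _).trans (add_le_add (hC _ (abs_le.1 (hyM s hs.1.le hne))) (hub s))

theorem hasDerivWithinAt_continuousOn_abs_le_of_dissipative (hf : Continuous f)
    (hy : ∀ t, 0 ≤ t → y t = x₀ + ∫ s in (0 : ℝ)..t, (f (y s) + u s))
    (hu : ∀ t, 0 ≤ t → ContinuousWithinAt y (Ici t) t → ContinuousWithinAt u (Ici t) t)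
    (hu_meas : ∀ μ : Measure ℝ, AEStronglyMeasurable y μ → AEStronglyMeasurable u μ)
    (hlam : 0 < lam) (hcontr : ∀ a b, (a - b) * (f a - f b) ≤ -lam * (a - b) ^ 2)
    (hub : ∀ s, |u s| ≤ γ) :
    (∀ t, 0 ≤ t → HasDerivWithinAt y (f (y t) + u t) (Ici t) t) ∧
      (∀ T, 0 ≤ T → ContinuousOn y (Icc 0 T)) ∧
      ∀ t, 0 ≤ t → |y t| ≤ absorbingRadius x₀ (|f 0| + γ) lam := by
  have hg := fun T (hT : 0 ≤ T) =>
    intervalIntegrable_of_dissipative hf hy hu hu_meas hlam hcontr hub hT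
  exact ⟨fun t ht => hasDerivWithinAt_of_intervalIntegrable hf hy hu (hg (t + 1) (by linarith))
      ⟨ht, by linarith⟩,
    fun T hT => continuousOn_Icc_of_eq_add_integral hy (hg T hT),
    fun t ht => abs_le_absorbingRadius_of_intervalIntegrable hf hy hu hlam hcontr hub ht (hg t ht)⟩

end Dissipative

theorem abs_sampled_sub_le {f κ x y : ℝ → ℝ} {x₀ lam Lκ γ K δ t : ℝ} (hδ : 0 < δ)
    (hf : Continuous f) (hlam : 0 < lam) (hLκ : 0 ≤ Lκ) (hLκlam : Lκ < lam)
    (hcontr : ∀ a b, (a - b) * (f a - f b) ≤ -lam * (a - b) ^ 2)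
    (hκLip : ∀ a b, |κ a - κ b| ≤ Lκ * |a - b|) (hκbd : ∀ a, |κ a| ≤ γ)
    (hK : ∀ a, |a| ≤ absorbingRadius x₀ (|f 0| + γ) lam → |f a| + γ ≤ K)
    (hx : ∀ t, 0 ≤ t → x t = x₀ + ∫ s in (0 : ℝ)..t, (f (x s) + κ (x s)))
    (hy : ∀ t, 0 ≤ t → y t = x₀ + ∫ s in (0 : ℝ)..t, (f (y s) + κ (y (piD δ s))))
    (ht : 0 ≤ t) : |y t - x t| ≤ Lκ * K / (lam - Lκ) * δ := by
  have hκ : Continuous κ :=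
    (LipschitzWith.of_dist_le' fun a b => by simpa only [Real.dist_eq] using hκLip a b).continuous
  obtain ⟨hxd, hxc, -⟩ := hasDerivWithinAt_continuousOn_abs_le_of_dissipative hf hx
    (fun _ _ h => hκ.continuousAt.comp_continuousWithinAt h)
    (fun _ h => hκ.comp_aestronglyMeasurable h) hlam hcontr fun s => hκbd (x s)
  obtain ⟨hyd, hyc, hyM⟩ := hasDerivWithinAt_continuousOn_abs_le_of_dissipative hf hy
    (fun t _ _ => continuousWithinAt_comp_piD hδ (κ ∘ y) t)
    (fun _ _ => (measurable_comp_piD δ (κ ∘ y)).aestronglyMeasurable) hlam hcontr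
    fun s => hκbd (y (piD δ s))
  have hsample : ∀ s, 0 ≤ s → |y (piD δ s) - y s| ≤ K * δ := fun s hs =>
    abs_comp_piD_sub_le hδ hs (hyc s hs) hyd fun r hr =>
      (abs_add_le _ _).trans ((add_le_add_right (hκbd _) _).trans (hK _ (hyM r hr)))
  have hy0 : y 0 = x 0 := by simp only [hx 0 le_rfl, hy 0 le_rfl, intervalIntegral.integral_same]
  have hsq := sq_le_sq_add_div_of_hasDerivWithinAt (φ := fun s => y s - x s) (ε := (Lκ * (K * δ)) ^ 2 / (lam - Lκ))
    (sub_pos.2 hLκlam) (by positivity) ht ((hyc t ht).sub (hxc t ht))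
    (fun s hs => (hyd s hs.1).sub (hxd s hs.1)) fun s hs => by
      have hB : |κ (y (piD δ s)) - κ (x s)| ≤ Lκ * (K * δ) + Lκ * |y s - x s| := by
        calc |κ (y (piD δ s)) - κ (x s)| ≤ Lκ * |y (piD δ s) - x s| := hκLip _ _
          _ ≤ Lκ * (|y (piD δ s) - y s| + |y s - x s|) :=
            mul_le_mul_of_nonneg_left (abs_sub_le _ _ _) hLκ
          _ ≤ Lκ * (K * δ) + Lκ * |y s - x s| := by nlinarith [hsample s hs.1]
      convert two_mul_mul_add_le hLκlam (hcontr (y s) (x s)) hB using 2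
      ring
  have hK0 : 0 ≤ K := by
    have := hK 0 (by rw [abs_zero]; exact sqrt_nonneg _)
    linarith [abs_nonneg (f 0), (abs_nonneg (κ 0)).trans (hκbd 0)]
  rw [hy0, sub_self] at hsq
  refine abs_le_of_sq_le_sq (hsq.trans_eq ?_) ?_
  · field_simp
    ring
  · have := sub_pos.2 hLκlam
    positivity

theorem stmt12_general
    (f κ : ℝ → ℝ) (x₀ : ℝ) (x : ℝ → ℝ)
    -- Assumption (A1)
    (lam ξ μ Lκ γ : ℝ) (q : ℕ)
    (hlam : 0 < lam) (hLκ : 0 < Lκ) (hγ : 0 < γ)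
    (hcontr : ∀ a b : ℝ, (a - b) * (f a - f b) ≤ -lam * (a - b) ^ 2)
    (hfLip : ∀ a b : ℝ, |f a - f b| ≤ (ξ * (|a| ^ q + |b| ^ q) + μ) * |a - b|)
    (hκLip : ∀ a b : ℝ, |κ a - κ b| ≤ Lκ * |a - b|)
    (hgap : lam / 2 - Lκ > 0)
    (hκbd : ∀ a : ℝ, |κ a| ≤ γ)
    -- the closed-loop ODE `dx/dt = f(x) + κ(x)`, `x(0) = x₀`
    (hx : ∀ t : ℝ, 0 ≤ t → x t = x₀ + ∫ s in (0:ℝ)..t, (f (x s) + κ (x s)))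
    -- the sampled-data closed-loop system
    (xd : ℝ → ℝ → ℝ)
    (hxd : ∀ δ : ℝ, 0 < δ → ∀ t : ℝ, 0 ≤ t →
      xd δ t = x₀ + ∫ s in (0:ℝ)..t, (f (xd δ s) + κ (xd δ (piD δ s))))
    :
    ∀ p : ℕ, 1 ≤ p → ∃ δ₀ : ℝ, 0 < δ₀ ∧ ∃ C : ℝ, 0 < C ∧
      ∀ δ : ℝ, 0 < δ → δ < δ₀ → ∀ t : ℝ, 0 ≤ t →
        |xd δ t - x t| ^ p ≤ C * δ ^ p := by
  intro p _
  set M := absorbingRadius x₀ (|f 0| + γ) lam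
  have hf : Continuous f :=
    continuous_of_abs_sub_le_mul (L := fun a b => ξ * (|a| ^ q + |b| ^ q) + μ)
      (fun _ => by fun_prop) hfLip
  obtain ⟨C, hC⟩ := (isCompact_Icc (a := -M) (b := M)).exists_bound_of_continuousOn
    hf.continuousOn
  have hK : ∀ a, |a| ≤ M → |f a| + γ ≤ C + γ := fun a ha => by
    simpa only [Real.norm_eq_abs, add_le_add_iff_right] using hC a (abs_le.1 ha)
  have hK0 : 0 ≤ C + γ := by
    linarith [hK 0 (by rw [abs_zero]; exact sqrt_nonneg _), abs_nonneg (f 0)]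
  have hLκlam : Lκ < lam := by linarith
  set B := Lκ * (C + γ) / (lam - Lκ)
  have hB : 0 ≤ B := div_nonneg (mul_nonneg hLκ.le hK0) (sub_pos.2 hLκlam).le
  refine ⟨1, one_pos, B ^ p + 1, by positivity, fun δ hδ _ t ht => ?_⟩
  have herr := abs_sampled_sub_le hδ hf hlam hLκ.le hLκlam hcontr hκLip hκbd hK hx (hxd δ hδ) ht
  calc |xd δ t - x t| ^ p ≤ (B * δ) ^ p := pow_le_pow_left₀ (abs_nonneg _) herr p
    _ = B ^ p * δ ^ p := mul_pow _ _ _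
    _ ≤ (B ^ p + 1) * δ ^ p := by gcongr; linarith

/-- Uniform-in-time LLN-type estimate: the sampled-data closed-loop
trajectory `x^δ` stays `O(δ)`-close (in every power `p`) to the closed-loop ODE
trajectory `x`, uniformly in time, for all sufficiently small `δ`. -/
theorem stmt12
    (f κ : ℝ → ℝ) (x₀ : ℝ) (x : ℝ → ℝ)
    -- Assumption (A1)
    (lam ξ μ Lκ γ : ℝ) (q : ℕ)
    (hlam : 0 < lam) (hξ : 0 < ξ) (hμ : 0 < μ) (hLκ : 0 < Lκ) (hγ : 0 < γ)
    (hcontr : ∀ a b : ℝ, (a - b) * (f a - f b) ≤ -lam * (a - b) ^ 2)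
    (hfLip : ∀ a b : ℝ, |f a - f b| ≤ (ξ * (|a| ^ q + |b| ^ q) + μ) * |a - b|)
    (hκLip : ∀ a b : ℝ, |κ a - κ b| ≤ Lκ * |a - b|)
    (hgap : lam / 2 - Lκ > 0)
    (hκbd : ∀ a : ℝ, |κ a| ≤ γ)
    -- the closed-loop ODE `dx/dt = f(x) + κ(x)`, `x(0) = x₀`
    (hx : ∀ t : ℝ, 0 ≤ t → x t = x₀ + ∫ s in (0:ℝ)..t, (f (x s) + κ (x s)))
    -- the sampled-data closed-loop system
    (xd : ℝ → ℝ → ℝ)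
    (hxd : ∀ δ : ℝ, 0 < δ → ∀ t : ℝ, 0 ≤ t →
      xd δ t = x₀ + ∫ s in (0:ℝ)..t, (f (xd δ s) + κ (xd δ (piD δ s))))
    :
    ∀ p : ℕ, 1 ≤ p → ∃ δ₀ : ℝ, 0 < δ₀ ∧ ∃ C : ℝ, 0 < C ∧
      ∀ δ : ℝ, 0 < δ → δ < δ₀ → ∀ t : ℝ, 0 ≤ t →
        |xd δ t - x t| ^ p ≤ C * δ ^ p :=
  stmt12_general f κ x₀ x lam ξ μ Lκ γ q hlam hLκ hγ hcontr hfLip hκLip hgap hκbd hx xd hxd
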